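/- Let 1 ≤ m ≤ n be integers, let 0 < s ≤ m, and let μ be a compactly supported Borel probability measure on ℝ^n whose support is contained in an s-Ahlfors regular set. Then for every ε > 0, for μ-almost every x there exist c > 0 and r₀ > 0 such that μ∗φ_r^m(x) ≤ c r^{−ε} μ(B(x,r)) for all 0 < r < r₀. -/

import Mathlib

/-
By Ahlfors regularity, the balls of radius `2R` around a `ρ/4`-net of the support have bounded
overlap, which bounds the `μ`-measure of `{z | c μ(B(z, ρ)) < μ(B(z, R))}` by `≲ (R/ρ)^s / c`.
With `R = 2^{-l}`, `ρ = 2^{-k}` and `c = 2^{(k-l)s + kδ}` these bounds are summable in `k`, so by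
Borel–Cantelli `μ`-a.e. `x` satisfies `μ(B(x, 2^{-l})) ≤ 2^{(k-l)s + kδ} μ(B(x, 2^{-k}))` for
`3 ≤ l ≤ k` and all large `k`. Splitting the kernel `min {1, (r/|x-y|)^m}` into dyadic shells, for
`2^{-k} ≤ r < 2^{-k+1}` each shell contributes at most `2^{2m} 2^{kδ} μ(B(x, 2^{-k}))` since
`s ≤ m`, and the `≤ k` shells cost another factor `2^{kδ}`.
-/

open MeasureTheory Metric Set
open scoped NNReal ENNReal

/-- The topological support of a measure. -/
def measureSupport {n : ℕ} (μ : Measure (EuclideanSpace ℝ (Fin n))) :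
    Set (EuclideanSpace ℝ (Fin n)) :=
  {x | ∀ U : Set (EuclideanSpace ℝ (Fin n)), IsOpen U → x ∈ U → 0 < μ U}

/-- The convolution `μ∗φ_r^m(x) = ∫ min {1, r^m |x-y|^{-m}} dμ(y)`, with the
integrand equal to `1` when `y = x`. -/
noncomputable def convPhi {n : ℕ} (m : ℕ) (μ : Measure (EuclideanSpace ℝ (Fin n)))
    (x : EuclideanSpace ℝ (Fin n)) (r : ℝ) : ℝ :=
  ∫ y, (if ‖x - y‖ = 0 then 1 else min 1 (r ^ m / ‖x - y‖ ^ m)) ∂μ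

/-- A closed set `F ⊆ ℝ^n` is `s`-Ahlfors regular if there are a Borel measure `λ`
and a constant `1 ≤ C < ∞` with `λ F > 0` and `C⁻¹ r^s ≤ λ(B(x,r)) ≤ C r^s` for all
`x ∈ F` and `0 < r ≤ 1`. -/
def IsAhlforsRegular {n : ℕ} (s : ℝ) (F : Set (EuclideanSpace ℝ (Fin n))) : Prop :=
  IsClosed F ∧ ∃ (lam : Measure (EuclideanSpace ℝ (Fin n))) (C : ℝ), 1 ≤ C ∧ 0 < lam F ∧
    ∀ x ∈ F, ∀ r : ℝ, 0 < r → r ≤ 1 →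
      ENNReal.ofReal (C⁻¹ * r ^ s) ≤ lam (ball x r) ∧ lam (ball x r) ≤ ENNReal.ofReal (C * r ^ s)

open Filter

noncomputable def dyadicRadius (j : ℕ) : ℝ := 2 ^ (-(j : ℝ))

lemma dyadicRadius_pos (j : ℕ) : 0 < dyadicRadius j := by
  unfold dyadicRadius; positivity

lemma dyadicRadius_strictAnti : StrictAnti dyadicRadius := fun i j hij => by
  unfold dyadicRadius
  exact (Real.rpow_lt_rpow_left_iff one_lt_two).2 (neg_lt_neg (Nat.cast_lt.2 hij))

lemma dyadicRadius_three : dyadicRadius 3 = 1 / 8 := by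
  rw [dyadicRadius, Real.rpow_neg zero_le_two, Real.rpow_natCast]; norm_num

lemma dyadicRadius_div (a b : ℕ) : dyadicRadius a / dyadicRadius b = 2 ^ ((b : ℝ) - a) := by
  rw [dyadicRadius, dyadicRadius, ← Real.rpow_sub two_pos]; ring_nf

lemma dyadicRadius_div_rpow (a b : ℕ) (s : ℝ) :
    (dyadicRadius a / dyadicRadius b) ^ s = 2 ^ (((b : ℝ) - a) * s) := by
  rw [dyadicRadius_div, ← Real.rpow_mul zero_le_two]

lemma dyadicRadius_div_pow (a b m : ℕ) :
    (dyadicRadius a / dyadicRadius b) ^ m = 2 ^ (((b : ℝ) - a) * m) := by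
  rw [← Real.rpow_natCast, dyadicRadius_div_rpow]

lemma two_rpow_mul_le_rpow_neg {k : ℕ} {r ε : ℝ} (hr : 0 < r) (hrk : r ≤ dyadicRadius k)
    (hε : 0 ≤ ε) : (2 : ℝ) ^ (k * ε) ≤ r ^ (-ε) := by
  calc (2 : ℝ) ^ (k * ε) = dyadicRadius k ^ (-ε) := by
        rw [dyadicRadius, ← Real.rpow_mul zero_le_two]; ring_nf
    _ ≤ r ^ (-ε) := Real.rpow_le_rpow_of_nonpos hr hrk (neg_nonpos.2 hε)

lemma exists_dyadicRadius_succ_le_lt {a : ℕ} {d : ℝ} (hd : 0 < d) (hda : d < dyadicRadius a) :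
    ∃ l, a ≤ l ∧ dyadicRadius (l + 1) ≤ d ∧ d < dyadicRadius l := by
  have hex : ∃ l, dyadicRadius (l + 1) ≤ d := by
    obtain ⟨l, hl⟩ := exists_pow_lt_of_lt_one hd (by norm_num : (1 / 2 : ℝ) < 1)
    refine ⟨l, (dyadicRadius_strictAnti.antitone (Nat.le_succ l)).trans ?_⟩
    rw [dyadicRadius, Real.rpow_neg zero_le_two, Real.rpow_natCast, ← inv_pow, ← one_div]
    exact hl.le
  refine ⟨Nat.find hex, ?_, Nat.find_spec hex, ?_⟩
  · by_contra! h
    exact (Nat.find_spec hex).not_gt (hda.trans_le (dyadicRadius_strictAnti.antitone h))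
  · rcases Nat.eq_zero_or_eq_succ_pred (Nat.find hex) with h | h
    · rw [h]; exact hda.trans_le (dyadicRadius_strictAnti.antitone (Nat.zero_le a))
    · rw [h]; exact not_le.1 (Nat.find_min hex (h ▸ Nat.pred_lt_self (by omega)))

lemma le_two_rpow_div {δ : ℝ} (hδ : 0 < δ) (x : ℝ) : x ≤ 2 ^ (x * δ) / (δ * Real.log 2) := by
  have hlog : 0 < Real.log 2 := Real.log_pos one_lt_two
  rw [le_div_iff₀ (by positivity), Real.rpow_def_of_pos two_pos]
  nlinarith [Real.add_one_le_exp (Real.log 2 * (x * δ))]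

lemma sixtyFour_mul_dyadicRadius_div_rpow_div (s δ : ℝ) (k l : ℕ) :
    (64 * dyadicRadius l / dyadicRadius k) ^ s / 2 ^ (((k : ℝ) - l) * s + k * δ) =
      2 ^ (6 * s) * (2 ^ (-δ)) ^ k := by
  rw [mul_div_assoc, dyadicRadius_div, show (64 : ℝ) = 2 ^ (6 : ℝ) by norm_num,
    ← Real.rpow_add two_pos, ← Real.rpow_mul zero_le_two, ← Real.rpow_sub two_pos,
    ← Real.rpow_natCast, ← Real.rpow_mul zero_le_two, ← Real.rpow_add two_pos]
  ring_nf

lemma dyadicRadius_div_pow_mul_le {m j l : ℕ} {s : ℝ} (hsm : s ≤ m) (hlj : l ≤ j) :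
    (dyadicRadius j / dyadicRadius (l + 1)) ^ m * 2 ^ ((((j + 1 : ℕ) : ℝ) - l) * s) ≤
      2 ^ (2 * (m : ℝ)) := by
  rw [dyadicRadius_div_pow, ← Real.rpow_add two_pos]
  refine Real.rpow_le_rpow_of_exponent_le one_le_two ?_
  have : (l : ℝ) ≤ j := Nat.cast_le.2 hlj
  push_cast
  nlinarith

lemma measureSupport_eq_support {n : ℕ} (μ : Measure (EuclideanSpace ℝ (Fin n))) :
    measureSupport μ = μ.support := by
  rw [Measure.support_eq_forall_isOpen]
  ext x
  exact ⟨fun h U hxU hU => h U hU hxU, fun h U hU hxU => h U hxU hU⟩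

section AhlforsRegular

variable {X : Type*} [PseudoMetricSpace X]

lemma IsCompact.exists_finset_separated_cover {K : Set X} (hK : IsCompact K) {t : ℝ}
    (ht : 0 < t) : ∃ P : Finset X, ↑P ⊆ K ∧ (P : Set X).Pairwise (fun p q => t < dist p q) ∧
      K ⊆ ⋃ p ∈ P, closedBall p t := by
  obtain ⟨ε, rfl⟩ : ∃ ε : ℝ≥0, (ε : ℝ) = t := ⟨t.toNNReal, Real.coe_toNNReal t ht.le⟩
  have hpack : packingNumber ε K ≠ ⊤ := by
    have hε : ε / 2 ≠ 0 := (div_pos (NNReal.coe_pos.1 ht) two_pos).ne'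
    obtain ⟨N, -, hNfin, hN⟩ := exists_finite_isCover_of_isCompact hε hK
    have := (packingNumber_two_mul_le_externalCoveringNumber _ K).trans
      hN.externalCoveringNumber_le_encard
    rw [mul_div_cancel₀ _ two_ne_zero] at this
    exact ne_top_of_le_ne_top (Set.encard_ne_top_iff.2 hNfin) this
  have hfin : (maximalSeparatedSet ε K).Finite := by
    rw [← Set.encard_ne_top_iff, encard_maximalSeparatedSet hpack]; exact hpack
  refine ⟨hfin.toFinset, by simpa using maximalSeparatedSet_subset, fun p hp q hq hpq => ?_, ?_⟩
  · have : (ε : ℝ≥0∞) < edist p q :=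
      isSeparated_maximalSeparatedSet (by simpa using hp) (by simpa using hq) hpq
    rwa [edist_dist, ← ENNReal.ofReal_coe_nnreal,
      ENNReal.ofReal_lt_ofReal_iff_of_nonneg ε.coe_nonneg] at this
  · simpa using (isCover_maximalSeparatedSet hpack).subset_iUnion_closedBall

variable [MeasurableSpace X]

/-- A point `z` of the set within `t` of `p ∈ P` gives
`c μ(closedBall p t ∩ set) ≤ c μ(B(z, ρ)) < μ(B(z, R)) ≤ μ(B(p, 2R))`. -/
lemma ofReal_mul_measure_setOf_lt_le_sum {μ : Measure X} {K : Set X} (hμK : μ Kᶜ = 0)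
    {P : Finset X} {t ρ R c : ℝ} (hKP : K ⊆ ⋃ p ∈ P, closedBall p t) (htρ : 2 * t < ρ)
    (htR : t ≤ R) :
    ENNReal.ofReal c * μ {z | ENNReal.ofReal c * μ (ball z ρ) < μ (ball z R)} ≤
      ∑ p ∈ P, μ (ball p (2 * R)) := by
  set S := {z | ENNReal.ofReal c * μ (ball z ρ) < μ (ball z R)}
  have hlocal (p : X) : ENNReal.ofReal c * μ (closedBall p t ∩ S) ≤ μ (ball p (2 * R)) := by
    rcases (closedBall p t ∩ S).eq_empty_or_nonempty with h | ⟨z, hzp, hzS⟩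
    · simp [h]
    rw [mem_closedBall] at hzp
    calc ENNReal.ofReal c * μ (closedBall p t ∩ S) ≤ ENNReal.ofReal c * μ (ball z ρ) := by
          gcongr
          rintro w ⟨hw, -⟩
          rw [mem_closedBall] at hw
          rw [mem_ball]
          linarith [dist_triangle_right w z p]
      _ ≤ μ (ball z R) := hzS.le
      _ ≤ μ (ball p (2 * R)) := measure_mono (ball_subset_ball' (by linarith))
  calc ENNReal.ofReal c * μ S = ENNReal.ofReal c * μ (S ∩ K) := by
        rw [measure_inter_conull hμK]
    _ ≤ ENNReal.ofReal c * ∑ p ∈ P, μ (closedBall p t ∩ S) := by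
        gcongr
        refine (measure_mono fun z hz => ?_).trans (measure_biUnion_finset_le P _)
        obtain ⟨hzS, hzK⟩ := hz
        obtain ⟨p, hp, hzp⟩ := mem_iUnion₂.1 (hKP hzK)
        exact mem_iUnion₂.2 ⟨p, hp, hzp, hzS⟩
    _ ≤ ∑ p ∈ P, μ (ball p (2 * R)) := by
        rw [Finset.mul_sum]; exact Finset.sum_le_sum fun p _ => hlocal p

variable [OpensMeasurableSpace X] {lam μ : Measure X} {C s : ℝ} {F : Set X}

def IsAhlforsRegularWith (lam : Measure X) (C s : ℝ) (F : Set X) : Prop :=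
  ∀ x ∈ F, ∀ r : ℝ, 0 < r → r ≤ 1 →
    ENNReal.ofReal (C⁻¹ * r ^ s) ≤ lam (ball x r) ∧ lam (ball x r) ≤ ENNReal.ofReal (C * r ^ s)

namespace IsAhlforsRegularWith

variable (hreg : IsAhlforsRegularWith lam C s F) (hC : 0 < C)
include hreg hC

lemma card_le_of_pairwiseDisjoint {Q : Finset X} (hQF : ↑Q ⊆ F) {σ ρ : ℝ} (hσ : 0 < σ)
    (hσρ : σ ≤ ρ) (hρ : ρ ≤ 1) (hdisj : (Q : Set X).PairwiseDisjoint (ball · σ)) {z : X}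
    (hz : z ∈ F) (hQz : ∀ q ∈ Q, ball q σ ⊆ ball z ρ) :
    (Q.card : ℝ) ≤ C ^ 2 * (ρ / σ) ^ s := by
  have hmass : ENNReal.ofReal (Q.card * (C⁻¹ * σ ^ s)) ≤ ENNReal.ofReal (C * ρ ^ s) :=
    calc ENNReal.ofReal (Q.card * (C⁻¹ * σ ^ s)) = ∑ q ∈ Q, ENNReal.ofReal (C⁻¹ * σ ^ s) := by
          rw [Finset.sum_const, nsmul_eq_mul, ENNReal.ofReal_mul (Nat.cast_nonneg _),
            ENNReal.ofReal_natCast]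
      _ ≤ ∑ q ∈ Q, lam (ball q σ) :=
          Finset.sum_le_sum fun q hq => (hreg q (hQF hq) σ hσ (hσρ.trans hρ)).1
      _ = lam (⋃ q ∈ Q, ball q σ) :=
          (measure_biUnion_finset hdisj fun _ _ => measurableSet_ball).symm
      _ ≤ lam (ball z ρ) := measure_mono (iUnion₂_subset hQz)
      _ ≤ ENNReal.ofReal (C * ρ ^ s) := (hreg z hz ρ (hσ.trans_le hσρ) hρ).2
  rw [ENNReal.ofReal_le_ofReal_iff (mul_nonneg hC.le (Real.rpow_nonneg (by linarith) s))] at hmass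
  rw [Real.div_rpow (by linarith) hσ.le, mul_div_assoc', le_div_iff₀ (by positivity)]
  calc Q.card * σ ^ s = C * (Q.card * (C⁻¹ * σ ^ s)) := by field_simp
    _ ≤ C * (C * ρ ^ s) := by gcongr
    _ = C ^ 2 * ρ ^ s := by ring

lemma sum_indicator_ball_le {P : Finset X} (hPF : ↑P ⊆ F) {t ρ : ℝ} (ht : 0 < t)
    (hsep : (P : Set X).Pairwise (fun p q => t < dist p q)) (hρ : 0 ≤ ρ)
    (hρt : 2 * ρ + t / 2 ≤ 1) (y : X) :
    ∑ p ∈ P, (ball p ρ).indicator 1 y ≤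
      ENNReal.ofReal (C ^ 2 * ((2 * ρ + t / 2) / (t / 2)) ^ s) := by
  classical
  set Q := P.filter (fun p => dist y p < ρ)
  have hsum : ∑ p ∈ P, (ball p ρ).indicator (1 : X → ℝ≥0∞) y = Q.card := by
    simp only [indicator_apply, mem_ball, Pi.one_apply, Finset.sum_boole, Q]
  rw [hsum, ← ENNReal.ofReal_natCast]
  refine ENNReal.ofReal_le_ofReal ?_
  rcases Q.eq_empty_or_nonempty with hQ | ⟨p₀, hp₀⟩
  · rw [hQ, Finset.card_empty, Nat.cast_zero]
    exact mul_nonneg (sq_nonneg C) (Real.rpow_nonneg (div_nonneg (by linarith) (by linarith)) s)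
  have hQP : Q ⊆ P := Finset.filter_subset _ _
  refine hreg.card_le_of_pairwiseDisjoint hC ((Finset.coe_subset.2 hQP).trans hPF)
    (half_pos ht) (by linarith) hρt (fun p hp q hq hpq => ?_) (hPF (hQP hp₀)) fun q hq w hw => ?_
  · exact ball_disjoint_ball (by linarith [hsep (hQP hp) (hQP hq) hpq])
  · have hq := (Finset.mem_filter.1 hq).2
    have hp₀ := (Finset.mem_filter.1 hp₀).2
    rw [mem_ball] at hw ⊢
    linarith [dist_triangle w q y, dist_triangle w y p₀, dist_comm q y]

variable (hs : 0 ≤ s) {K : Set X} (hK : IsCompact K) (hKF : K ⊆ F) (hμK : μ Kᶜ = 0)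
include hs hK hKF hμK

theorem measure_setOf_lt_measure_ball_le {ρ R c : ℝ} (hρ : 0 < ρ) (hρR : ρ ≤ R) (hR : R ≤ 1 / 8)
    (hc : 0 < c) :
    μ {z | ENNReal.ofReal c * μ (ball z ρ) < μ (ball z R)} ≤
      ENNReal.ofReal (C ^ 2 * (64 * R / ρ) ^ s / c) * μ univ := by
  set S := {z | ENNReal.ofReal c * μ (ball z ρ) < μ (ball z R)}
  set N := C ^ 2 * (64 * R / ρ) ^ s
  obtain ⟨P, hPK, hsep, hKP⟩ := hK.exists_finset_separated_cover (by positivity : 0 < ρ / 4)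
  have hoverlap (y : X) : ∑ p ∈ P, (ball p (2 * R)).indicator 1 y ≤ ENNReal.ofReal N := by
    refine (hreg.sum_indicator_ball_le hC (hPK.trans hKF) (by positivity) hsep (by linarith)
      (by linarith) y).trans (ENNReal.ofReal_le_ofReal ?_)
    refine mul_le_mul_of_nonneg_left (Real.rpow_le_rpow (div_nonneg (by linarith) (by linarith))
      ?_ hs) (sq_nonneg C)
    rw [div_le_div_iff₀ (by positivity) hρ]
    nlinarith
  have hsum : ∑ p ∈ P, μ (ball p (2 * R)) ≤ ENNReal.ofReal N * μ univ :=
    calc ∑ p ∈ P, μ (ball p (2 * R)) = ∫⁻ y, ∑ p ∈ P, (ball p (2 * R)).indicator 1 y ∂μ := by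
          rw [lintegral_finsetSum _ fun p _ => measurable_one.indicator measurableSet_ball]
          simp only [lintegral_indicator_one measurableSet_ball]
      _ ≤ ∫⁻ _, ENNReal.ofReal N ∂μ := lintegral_mono hoverlap
      _ = ENNReal.ofReal N * μ univ := lintegral_const _
  have hcS : ENNReal.ofReal c * μ S ≤ ENNReal.ofReal N * μ univ :=
    (ofReal_mul_measure_setOf_lt_le_sum hμK hKP (by linarith) (by linarith)).trans hsum
  calc μ S = ENNReal.ofReal c⁻¹ * (ENNReal.ofReal c * μ S) := by
        rw [← mul_assoc, ← ENNReal.ofReal_mul (by positivity), inv_mul_cancel₀ hc.ne',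
          ENNReal.ofReal_one, one_mul]
    _ ≤ ENNReal.ofReal c⁻¹ * (ENNReal.ofReal N * μ univ) := mul_le_mul_right hcS _
    _ = ENNReal.ofReal (N / c) * μ univ := by
        rw [← mul_assoc, ← ENNReal.ofReal_mul (by positivity), inv_mul_eq_div]

theorem ae_eventually_measureReal_ball_le [IsFiniteMeasure μ] {δ : ℝ} (hδ : 0 < δ) :
    ∀ᵐ x ∂μ, ∀ᶠ k in atTop, ∀ l ∈ Finset.Icc 3 k, μ.real (ball x (dyadicRadius l)) ≤
      2 ^ (((k : ℝ) - l) * s + k * δ) * μ.real (ball x (dyadicRadius k)) := by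
  set q : ℝ := 2 ^ (-δ)
  set A : ℝ := C ^ 2 * 2 ^ (6 * s)
  set bad : ℕ → Set X := fun k => ⋃ l ∈ Finset.Icc 3 k,
    {z | ENNReal.ofReal (2 ^ (((k : ℝ) - l) * s + k * δ)) * μ (ball z (dyadicRadius k)) <
      μ (ball z (dyadicRadius l))}
  have hbad (k : ℕ) : μ (bad k) ≤ ENNReal.ofReal ((k + 1) * (A * q ^ k)) * μ univ :=
    calc μ (bad k) ≤ ∑ l ∈ Finset.Icc 3 k, ENNReal.ofReal (A * q ^ k) * μ univ := by
          refine (measure_biUnion_finset_le _ _).trans (Finset.sum_le_sum fun l hl => ?_)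
          obtain ⟨h3l, hlk⟩ := Finset.mem_Icc.1 hl
          have hR : dyadicRadius l ≤ 1 / 8 :=
            dyadicRadius_three ▸ dyadicRadius_strictAnti.antitone h3l
          have := hreg.measure_setOf_lt_measure_ball_le hC hs hK hKF hμK (dyadicRadius_pos k)
            (dyadicRadius_strictAnti.antitone hlk) hR
            (c := 2 ^ (((k : ℝ) - l) * s + k * δ)) (Real.rpow_pos_of_pos two_pos _)
          rwa [mul_div_assoc, sixtyFour_mul_dyadicRadius_div_rpow_div, ← mul_assoc] at this
      _ ≤ ENNReal.ofReal ((k + 1) * (A * q ^ k)) * μ univ := by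
          rw [Finset.sum_const, nsmul_eq_mul, ← mul_assoc, ← ENNReal.ofReal_natCast,
            ← ENNReal.ofReal_mul (Nat.cast_nonneg _)]
          gcongr
          rw [Nat.card_Icc]
          norm_cast
          omega
  have hq : ‖q‖ < 1 := by
    rw [Real.norm_of_nonneg (by positivity)]
    exact Real.rpow_lt_one_of_one_lt_of_neg one_lt_two (neg_neg_of_pos hδ)
  have hsummable : Summable fun k : ℕ => (k + 1) * (A * q ^ k) := by
    refine (((summable_pow_mul_geometric_of_norm_lt_one 1 hq).add
      (summable_geometric_of_norm_lt_one hq)).mul_left A).congr fun k => ?_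
    ring
  have htsum : ∑' k, μ (bad k) ≠ ⊤ := by
    refine ne_top_of_le_ne_top ?_ (ENNReal.tsum_le_tsum hbad)
    rw [ENNReal.tsum_mul_right, ← ENNReal.ofReal_tsum_of_nonneg (fun k => by positivity) hsummable]
    exact ENNReal.mul_ne_top ENNReal.ofReal_ne_top (measure_ne_top μ univ)
  filter_upwards [ae_eventually_notMem htsum] with x hx
  filter_upwards [hx] with k hk l hl
  have hle : μ (ball x (dyadicRadius l)) ≤
      ENNReal.ofReal (2 ^ (((k : ℝ) - l) * s + k * δ)) * μ (ball x (dyadicRadius k)) :=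
    not_lt.1 fun h => hk (mem_iUnion₂.2 ⟨l, hl, h⟩)
  have := ENNReal.toReal_mono (ENNReal.mul_ne_top ENNReal.ofReal_ne_top (measure_ne_top μ _)) hle
  rwa [ENNReal.toReal_mul, ENNReal.toReal_ofReal (by positivity)] at this

end IsAhlforsRegularWith

end AhlforsRegular

/-- The integrand of `convPhi` as a function of `d = ‖x - y‖`. -/
noncomputable def phiKernel (m : ℕ) (r d : ℝ) : ℝ := if d = 0 then 1 else min 1 (r ^ m / d ^ m)

lemma phiKernel_nonneg (m : ℕ) {r d : ℝ} (hr : 0 ≤ r) (hd : 0 ≤ d) : 0 ≤ phiKernel m r d := by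
  unfold phiKernel
  split_ifs
  exacts [zero_le_one, le_min zero_le_one (by positivity)]

lemma phiKernel_le_one (m : ℕ) (r d : ℝ) : phiKernel m r d ≤ 1 := by
  unfold phiKernel
  split_ifs
  exacts [le_rfl, min_le_left _ _]

lemma phiKernel_le_div (m : ℕ) (r : ℝ) {d : ℝ} (hd : 0 < d) : phiKernel m r d ≤ r ^ m / d ^ m := by
  rw [phiKernel, if_neg hd.ne']
  exact min_le_right _ _

lemma exists_mem_Icc_phiKernel_le {m j : ℕ} (hj : 3 ≤ j) {r d : ℝ} (hr : 0 ≤ r)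
    (hrj : r ≤ dyadicRadius j) (hd3 : d < dyadicRadius 3) :
    ∃ l ∈ Finset.Icc 3 j, d < dyadicRadius l ∧
      phiKernel m r d ≤ (dyadicRadius j / dyadicRadius (l + 1)) ^ m := by
  rcases lt_or_ge d (dyadicRadius j) with hdj | hdj
  · refine ⟨j, Finset.mem_Icc.2 ⟨hj, le_rfl⟩, hdj, (phiKernel_le_one m r d).trans ?_⟩
    rw [dyadicRadius_div_pow]
    exact Real.one_le_rpow one_le_two (by push_cast; nlinarith)
  obtain ⟨l, h3l, hld, hdl⟩ :=
    exists_dyadicRadius_succ_le_lt ((dyadicRadius_pos j).trans_le hdj) hd3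
  have hlj : l < j := dyadicRadius_strictAnti.lt_iff_gt.1 (hdj.trans_lt hdl)
  refine ⟨l, Finset.mem_Icc.2 ⟨h3l, hlj.le⟩, hdl,
    (phiKernel_le_div m r ((dyadicRadius_pos _).trans_le hld)).trans ?_⟩
  have := dyadicRadius_pos (l + 1)
  have := dyadicRadius_pos j
  rw [div_pow]
  gcongr

lemma phiKernel_le_sum_indicator_ball {E : Type*} [SeminormedAddCommGroup E] {m j : ℕ}
    (hj : 3 ≤ j) {r : ℝ} (hr : 0 ≤ r) (hrj : r ≤ dyadicRadius j) (x y : E) :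
    phiKernel m r ‖x - y‖ ≤
      ∑ l ∈ Finset.Icc 3 j, (dyadicRadius j / dyadicRadius (l + 1)) ^ m *
        (ball x (dyadicRadius l)).indicator 1 y + (r / dyadicRadius 3) ^ m := by
  have hterm (l : ℕ) : 0 ≤ (dyadicRadius j / dyadicRadius (l + 1)) ^ m *
      (ball x (dyadicRadius l)).indicator (1 : E → ℝ) y :=
    mul_nonneg (pow_nonneg (div_pos (dyadicRadius_pos j) (dyadicRadius_pos _)).le m)
      (indicator_nonneg (fun _ _ => zero_le_one) y)
  have := dyadicRadius_pos 3
  rcases lt_or_ge ‖x - y‖ (dyadicRadius 3) with hd3 | hd3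
  · obtain ⟨l, hl, hdl, hκl⟩ := exists_mem_Icc_phiKernel_le (m := m) hj hr hrj hd3
    have hy : y ∈ ball x (dyadicRadius l) := by rwa [mem_ball, dist_comm, dist_eq_norm]
    calc phiKernel m r ‖x - y‖
        ≤ (dyadicRadius j / dyadicRadius (l + 1)) ^ m * (ball x (dyadicRadius l)).indicator 1 y := by
          rwa [indicator_of_mem hy, Pi.one_apply, mul_one]
      _ ≤ ∑ l ∈ Finset.Icc 3 j, (dyadicRadius j / dyadicRadius (l + 1)) ^ m *
          (ball x (dyadicRadius l)).indicator 1 y :=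
          Finset.single_le_sum (fun i _ => hterm i) hl
      _ ≤ _ := le_add_of_nonneg_right (by positivity)
  · calc phiKernel m r ‖x - y‖ ≤ r ^ m / ‖x - y‖ ^ m := phiKernel_le_div m r (by linarith)
      _ ≤ r ^ m / dyadicRadius 3 ^ m := by gcongr
      _ = (r / dyadicRadius 3) ^ m := (div_pow _ _ _).symm
      _ ≤ _ := le_add_of_nonneg_left (Finset.sum_nonneg fun i _ => hterm i)

section Convolution

variable {n m : ℕ} {μ : Measure (EuclideanSpace ℝ (Fin n))} {x : EuclideanSpace ℝ (Fin n)}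

lemma sum_le_of_measureReal_ball_le {s δ : ℝ} (hsm : s ≤ m) {j : ℕ}
    (hgood : ∀ l ∈ Finset.Icc 3 (j + 1), μ.real (ball x (dyadicRadius l)) ≤
      2 ^ ((((j + 1 : ℕ) : ℝ) - l) * s + ((j + 1 : ℕ) : ℝ) * δ) *
        μ.real (ball x (dyadicRadius (j + 1)))) :
    ∑ l ∈ Finset.Icc 3 j, (dyadicRadius j / dyadicRadius (l + 1)) ^ m *
      μ.real (ball x (dyadicRadius l)) ≤ ((j + 1 : ℕ) : ℝ) * (2 ^ (2 * (m : ℝ)) *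
        (2 ^ (((j + 1 : ℕ) : ℝ) * δ) * μ.real (ball x (dyadicRadius (j + 1))))) := by
  set M := μ.real (ball x (dyadicRadius (j + 1)))
  set D : ℝ := 2 ^ (((j + 1 : ℕ) : ℝ) * δ)
  have hterm : ∀ l ∈ Finset.Icc 3 j, (dyadicRadius j / dyadicRadius (l + 1)) ^ m *
      μ.real (ball x (dyadicRadius l)) ≤ 2 ^ (2 * (m : ℝ)) * (D * M) := by
    intro l hl
    obtain ⟨h3l, hlj⟩ := Finset.mem_Icc.1 hl
    have hdiv := dyadicRadius_div_pow_mul_le (m := m) hsm hlj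
    have := hgood l (Finset.mem_Icc.2 ⟨h3l, by omega⟩)
    have := dyadicRadius_pos j
    have := dyadicRadius_pos (l + 1)
    calc _ ≤ (dyadicRadius j / dyadicRadius (l + 1)) ^ m *
          (2 ^ ((((j + 1 : ℕ) : ℝ) - l) * s + ((j + 1 : ℕ) : ℝ) * δ) * M) := by
          gcongr
      _ = (dyadicRadius j / dyadicRadius (l + 1)) ^ m * 2 ^ ((((j + 1 : ℕ) : ℝ) - l) * s) *
          (D * M) := by rw [Real.rpow_add two_pos]; ring
      _ ≤ _ := by gcongr
  refine (Finset.sum_le_card_nsmul _ _ _ hterm).trans ?_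
  rw [nsmul_eq_mul]
  gcongr
  rw [Nat.card_Icc]; omega

variable [IsFiniteMeasure μ]

lemma convPhi_le_sum_measureReal_ball {j : ℕ} (hj : 3 ≤ j) {r : ℝ} (hr : 0 ≤ r)
    (hrj : r ≤ dyadicRadius j) :
    convPhi m μ x r ≤ ∑ l ∈ Finset.Icc 3 j, (dyadicRadius j / dyadicRadius (l + 1)) ^ m *
      μ.real (ball x (dyadicRadius l)) + (r / dyadicRadius 3) ^ m * μ.real univ := by
  have hind (l : ℕ) : Integrable ((ball x (dyadicRadius l)).indicator 1) μ :=
    (integrable_const (1 : ℝ)).indicator measurableSet_ball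
  have hsum := integrable_finsetSum (Finset.Icc 3 j) fun l _ => (hind l).const_mul
    ((dyadicRadius j / dyadicRadius (l + 1)) ^ m)
  calc convPhi m μ x r
      ≤ ∫ y, (∑ l ∈ Finset.Icc 3 j, (dyadicRadius j / dyadicRadius (l + 1)) ^ m *
        (ball x (dyadicRadius l)).indicator 1 y + (r / dyadicRadius 3) ^ m) ∂μ :=
        integral_mono_of_nonneg (.of_forall fun y => phiKernel_nonneg m hr (norm_nonneg _))
          (hsum.add (integrable_const _))
          (.of_forall (phiKernel_le_sum_indicator_ball hj hr hrj x))
    _ = _ := by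
        rw [integral_add hsum (integrable_const _),
          integral_finsetSum _ fun l _ => (hind l).const_mul _]
        simp only [integral_const_mul, integral_indicator_one measurableSet_ball, integral_const,
          smul_eq_mul, mul_comm (μ.real univ)]

/-- The term at distance `≳ 1` is absorbed into the `l = 3` term of the dyadic sum. -/
lemma convPhi_le_mul_sum_measureReal_ball (ha : 0 < μ.real (ball x (dyadicRadius 3))) {j : ℕ}
    (hj : 3 ≤ j) {r : ℝ} (hr : 0 ≤ r) (hrj : r ≤ dyadicRadius j) :
    convPhi m μ x r ≤ (1 + μ.real univ / μ.real (ball x (dyadicRadius 3))) *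
      ∑ l ∈ Finset.Icc 3 j, (dyadicRadius j / dyadicRadius (l + 1)) ^ m *
        μ.real (ball x (dyadicRadius l)) := by
  set a := μ.real (ball x (dyadicRadius 3))
  set S := ∑ l ∈ Finset.Icc 3 j, (dyadicRadius j / dyadicRadius (l + 1)) ^ m *
    μ.real (ball x (dyadicRadius l))
  have hfar : (r / dyadicRadius 3) ^ m * a ≤ S := by
    have := dyadicRadius_pos 3
    have := dyadicRadius_pos 4
    have := dyadicRadius_pos j
    calc (r / dyadicRadius 3) ^ m * a ≤ (dyadicRadius j / dyadicRadius (3 + 1)) ^ m * a := by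
          gcongr
          exact dyadicRadius_strictAnti.antitone (Nat.le_succ 3)
      _ ≤ S := Finset.single_le_sum (f := fun l => (dyadicRadius j / dyadicRadius (l + 1)) ^ m *
            μ.real (ball x (dyadicRadius l)))
          (fun l _ => mul_nonneg (pow_nonneg (div_pos (dyadicRadius_pos j)
            (dyadicRadius_pos _)).le m) measureReal_nonneg) (Finset.mem_Icc.2 ⟨le_rfl, hj⟩)
  calc convPhi m μ x r ≤ S + (r / dyadicRadius 3) ^ m * μ.real univ :=
        convPhi_le_sum_measureReal_ball hj hr hrj
    _ = S + μ.real univ / a * ((r / dyadicRadius 3) ^ m * a) := by field_simp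
    _ ≤ S + μ.real univ / a * S := by gcongr
    _ = (1 + μ.real univ / a) * S := by ring

/-- For `2^{-(j+1)} ≤ r < 2^{-j}` the dyadic sum has `≤ j + 1` terms, each at most
`2^{2m} 2^{(j+1)δ} μ(B(x, 2^{-(j+1)}))`, and `j + 1 ≲ 2^{(j+1)δ} / δ`. -/
theorem exists_convPhi_le_of_measureReal_ball_le {s δ : ℝ} (hsm : s ≤ m) (hδ : 0 < δ)
    (ha : 0 < μ.real (ball x (dyadicRadius 3))) {k₀ : ℕ}
    (hgood : ∀ k ≥ k₀, ∀ l ∈ Finset.Icc 3 k, μ.real (ball x (dyadicRadius l)) ≤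
      2 ^ (((k : ℝ) - l) * s + k * δ) * μ.real (ball x (dyadicRadius k))) :
    ∃ c > 0, ∃ r₀ > 0, ∀ r, 0 < r → r < r₀ →
      convPhi m μ x r ≤ c * r ^ (-(2 * δ)) * μ.real (ball x r) := by
  set U := μ.real univ / μ.real (ball x (dyadicRadius 3))
  have hlog := Real.log_pos one_lt_two
  refine ⟨(1 + U) * 2 ^ (2 * (m : ℝ)) * 2 ^ (2 * δ) / (δ * Real.log 2), by positivity,
    dyadicRadius (max k₀ 3), dyadicRadius_pos _, fun r hr hrk => ?_⟩
  obtain ⟨j, hj, hjr, hrj⟩ := exists_dyadicRadius_succ_le_lt hr hrk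
  set M := μ.real (ball x (dyadicRadius (j + 1)))
  set D : ℝ := 2 ^ (((j + 1 : ℕ) : ℝ) * δ)
  have hD : D * D ≤ 2 ^ (2 * δ) * r ^ (-(2 * δ)) :=
    calc D * D = 2 ^ (2 * δ) * 2 ^ (j * (2 * δ)) := by
          rw [← Real.rpow_add two_pos, ← Real.rpow_add two_pos]; push_cast; ring_nf
      _ ≤ 2 ^ (2 * δ) * r ^ (-(2 * δ)) := by
          gcongr; exact two_rpow_mul_le_rpow_neg hr hrj.le (by positivity)
  have hM : M ≤ μ.real (ball x r) := measureReal_mono (ball_subset_ball hjr)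
  calc convPhi m μ x r ≤ (1 + U) * ∑ l ∈ Finset.Icc 3 j,
        (dyadicRadius j / dyadicRadius (l + 1)) ^ m * μ.real (ball x (dyadicRadius l)) :=
        convPhi_le_mul_sum_measureReal_ball ha (by omega) hr.le hrj.le
    _ ≤ (1 + U) * (((j + 1 : ℕ) : ℝ) * (2 ^ (2 * (m : ℝ)) * (D * M))) := by
        gcongr
        exact sum_le_of_measureReal_ball_le hsm (hgood (j + 1) (by omega))
    _ ≤ (1 + U) * (D / (δ * Real.log 2) * (2 ^ (2 * (m : ℝ)) * (D * M))) := by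
        gcongr
        exact le_two_rpow_div hδ _
    _ = (1 + U) * 2 ^ (2 * (m : ℝ)) / (δ * Real.log 2) * (D * D) * M := by ring
    _ ≤ (1 + U) * 2 ^ (2 * (m : ℝ)) / (δ * Real.log 2) * (2 ^ (2 * δ) * r ^ (-(2 * δ))) *
        μ.real (ball x r) := by gcongr
    _ = _ := by ring

end Convolution

theorem stmt_12_general (n m : ℕ) (s : ℝ) (hs : 0 < s) (hsm : s ≤ m)
    (μ : Measure (EuclideanSpace ℝ (Fin n))) [IsProbabilityMeasure μ]
    (hcompact : IsCompact (measureSupport μ))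
    (F : Set (EuclideanSpace ℝ (Fin n))) (hF : IsAhlforsRegular s F)
    (hsupp : measureSupport μ ⊆ F) :
    ∀ ε : ℝ, 0 < ε → ∀ᵐ x ∂μ, ∃ c > (0 : ℝ), ∃ r₀ > (0 : ℝ),
      ∀ r : ℝ, 0 < r → r < r₀ →
        convPhi m μ x r ≤ c * r ^ (-ε) * (μ (ball x r)).toReal := by
  intro ε hε
  obtain ⟨-, lam, C, hC, -, hreg⟩ := hF
  rw [measureSupport_eq_support] at hcompact hsupp
  have hdoubling := IsAhlforsRegularWith.ae_eventually_measureReal_ball_le hreg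
    (by linarith) hs.le hcompact hsupp Measure.measure_compl_support (half_pos hε)
  filter_upwards [hdoubling, Measure.support_mem_ae] with x hx hxμ
  obtain ⟨k₀, hk₀⟩ := eventually_atTop.1 hx
  have ha : 0 < μ.real (ball x (dyadicRadius 3)) :=
    ENNReal.toReal_pos ((Measure.mem_support_iff_forall x).1 hxμ _
      (ball_mem_nhds x (dyadicRadius_pos 3))).ne' (measure_ne_top μ _)
  simpa only [mul_div_cancel₀ ε two_ne_zero, measureReal_def] using
    exists_convPhi_le_of_measureReal_ball_le hsm (half_pos hε) ha hk₀

theorem stmt_12 (n m : ℕ) (hm : 1 ≤ m) (hmn : m ≤ n) (s : ℝ) (hs : 0 < s) (hsm : s ≤ m)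
    (μ : Measure (EuclideanSpace ℝ (Fin n))) [IsProbabilityMeasure μ]
    (hcompact : IsCompact (measureSupport μ))
    (F : Set (EuclideanSpace ℝ (Fin n))) (hF : IsAhlforsRegular s F)
    (hsupp : measureSupport μ ⊆ F) :
    ∀ ε : ℝ, 0 < ε → ∀ᵐ x ∂μ, ∃ c > (0 : ℝ), ∃ r₀ > (0 : ℝ),
      ∀ r : ℝ, 0 < r → r < r₀ →
        convPhi m μ x r ≤ c * r ^ (-ε) * (μ (ball x r)).toReal :=
  stmt_12_general n m s hs hsm μ hcompact F hF hsupp
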